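/- arXiv:2307.00262 — 2 statements merged into one kernel-verified Lean document; each statement's English description precedes it below -/
import Mathlib

section
/- Let $p, q \in \mathbb{R}^n$ with $p_n > 0$ and $q_n \le 0$, and suppose $|p - q| \le |p|$ and $\sum_{i=1}^{n-1} p_i^2 \le \varepsilon^2$ and $p_n \ge \delta > 0$. Then $|q_n| \le \varepsilon^2/(2\delta)$ and $|q_i| \le 2\varepsilon$ for each $i = 1, \dots, n-1$. Consequently $q$ lies in a box of volume at most $(4\varepsilon)^{n-1} \cdot \varepsilon^2/\delta$. -/
open MeasureTheory

/-- Combined volume estimate: under the interior-ball inequality and the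
tangential smallness of `p`, the image point `q` has `|qₙ| ≤ ε²/(2δ)` and
`|qᵢ| ≤ 2ε` for `i < n`, hence lies in a box of volume at most `(4ε)ⁿ · ε²/δ`. -/
theorem stmt_2 (n : ℕ) (p q : EuclideanSpace ℝ (Fin (n + 1))) (ε δ : ℝ)
    (hε : 0 < ε) (hδ : 0 < δ)
    (hp : 0 < p (Fin.last n)) (hq : q (Fin.last n) ≤ 0)
    (h1 : ‖p - q‖ ≤ ‖p‖)
    (h2 : ∑ i : Fin n, (p i.castSucc) ^ 2 ≤ ε ^ 2)
    (h3 : δ ≤ p (Fin.last n)) :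
    |q (Fin.last n)| ≤ ε ^ 2 / (2 * δ) ∧
    (∀ i : Fin n, |q i.castSucc| ≤ 2 * ε) ∧
    WithLp.ofLp q ∈ Set.univ.pi (fun i : Fin (n + 1) =>
      Set.Icc (-(if i = Fin.last n then ε ^ 2 / (2 * δ) else 2 * ε))
        (if i = Fin.last n then ε ^ 2 / (2 * δ) else 2 * ε)) ∧
    volume (WithLp.ofLp ⁻¹' Set.univ.pi (fun i : Fin (n + 1) =>
      Set.Icc (-(if i = Fin.last n then ε ^ 2 / (2 * δ) else 2 * ε))
        (if i = Fin.last n then ε ^ 2 / (2 * δ) else 2 * ε)) :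
        Set (EuclideanSpace ℝ (Fin (n + 1))))
      ≤ ENNReal.ofReal ((4 * ε) ^ n * (ε ^ 2 / δ)) := by
  have hsq : ‖p - q‖ ^ 2 ≤ ‖p‖ ^ 2 := pow_le_pow_left₀ (norm_nonneg _) h1 2
  have hin : ‖q‖ ^ 2 ≤ 2 * (inner ℝ p q : ℝ) := by
    have := norm_sub_sq_real p q
    nlinarith
  have hnq : ‖q‖ ^ 2 = ∑ i, q i ^ 2 := by
    rw [EuclideanSpace.norm_eq, Real.sq_sqrt (by positivity)]
    simp [Real.norm_eq_abs, sq_abs]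
  have hip : (inner ℝ p q : ℝ) = ∑ i, p i * q i := by
    rw [PiLp.inner_apply]; simp [mul_comm]
  rw [hnq, hip] at hin
  rw [Fin.sum_univ_castSucc] at hin
  rw [Fin.sum_univ_castSucc (f := fun i => p i * q i)] at hin
  set A := ∑ i : Fin n, (q i.castSucc - p i.castSucc) ^ 2 with hA
  set B := ∑ i : Fin n, (p i.castSucc) ^ 2 with hB
  have e1 : A = (∑ i : Fin n, (q i.castSucc) ^ 2)
      - 2 * (∑ i : Fin n, p i.castSucc * q i.castSucc) + B := by
    simp only [hA, hB, Finset.mul_sum, ← Finset.sum_sub_distrib, ← Finset.sum_add_distrib]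
    apply Finset.sum_congr rfl; intro i _; ring
  have hkey : A + q (Fin.last n) ^ 2 + (-(2 * (p (Fin.last n) * q (Fin.last n)))) ≤ B := by
    linarith
  have hA0 : 0 ≤ A := Finset.sum_nonneg fun i _ => sq_nonneg _
  have hqn2 : 0 ≤ q (Fin.last n) ^ 2 := sq_nonneg _
  have hlast : |q (Fin.last n)| ≤ ε ^ 2 / (2 * δ) := by
    rw [abs_of_nonpos hq, le_div_iff₀ (by positivity)]
    nlinarith [mul_le_mul_of_nonneg_left h3 (neg_nonneg.mpr hq)]
  have hside : ∀ i : Fin n, |q i.castSucc| ≤ 2 * ε := by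
    intro i
    have h4 : (q i.castSucc - p i.castSucc) ^ 2 ≤ A := by
      rw [hA]
      exact Finset.single_le_sum (f := fun j : Fin n => (q j.castSucc - p j.castSucc) ^ 2)
        (fun j _ => sq_nonneg _) (Finset.mem_univ i)
    have h5 : (p i.castSucc) ^ 2 ≤ B := by
      rw [hB]
      exact Finset.single_le_sum (f := fun j : Fin n => (p j.castSucc) ^ 2)
        (fun j _ => sq_nonneg _) (Finset.mem_univ i)
    have h6 : |q i.castSucc - p i.castSucc| ≤ ε :=
      abs_le.mpr (abs_le_of_sq_le_sq' (by nlinarith) hε.le)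
    have h7 : |p i.castSucc| ≤ ε :=
      abs_le.mpr (abs_le_of_sq_le_sq' (by nlinarith) hε.le)
    calc |q i.castSucc| = |(q i.castSucc - p i.castSucc) + p i.castSucc| := by ring_nf
      _ ≤ |q i.castSucc - p i.castSucc| + |p i.castSucc| := abs_add_le _ _
      _ ≤ 2 * ε := by linarith
  refine ⟨hlast, hside, ?_, ?_⟩
  · intro i _
    by_cases hi : i = Fin.last n
    · subst hi; simp only [if_pos rfl]; exact abs_le.mp hlast
    · obtain ⟨j, rfl⟩ := Fin.exists_castSucc_eq.2 hi
      simp only [if_neg hi]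
      exact abs_le.mp (hside j)
  · rw [(PiLp.volume_preserving_ofLp (ι := Fin (n + 1))).measure_preimage
      (MeasurableSet.univ_pi fun _ => measurableSet_Icc).nullMeasurableSet, volume_pi_pi]
    simp only [Real.volume_Icc, sub_neg_eq_add]
    rw [Fin.prod_univ_castSucc]
    simp only [if_pos rfl, Fin.castSucc_lt_last, ne_eq]
    have hne : ∀ j : Fin n, (j.castSucc : Fin (n+1)) ≠ Fin.last n :=
      fun j => (Fin.castSucc_lt_last j).ne
    rw [Finset.prod_congr rfl (fun j _ => by rw [if_neg (hne j)])]
    rw [Finset.prod_const, Finset.card_univ, Fintype.card_fin]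
    have e2 : (ENNReal.ofReal (2 * ε + 2 * ε)) ^ n * ENNReal.ofReal (ε ^ 2 / (2 * δ) + ε ^ 2 / (2 * δ))
        = ENNReal.ofReal ((4 * ε) ^ n * (ε ^ 2 / δ)) := by
      rw [← ENNReal.ofReal_pow (by positivity), ← ENNReal.ofReal_mul (by positivity)]
      congr 1
      rw [show 2 * ε + 2 * ε = 4 * ε by ring]
      congr 1
      field_simp
      ring
    exact le_of_eq e2
end

section
/- Let $r > s > 0$, $p = (p_1, 0, \dots, 0, r - s) \in \mathbb{R}^n$ with $p_1 > 0$, and $q = (q_1, \dots, q_n) \in \mathbb{R}^n$. Suppose $|p-q|^2 \le p_1^2 + (r-s)^2$ and $q_n \le \frac{1}{s} p_1 q_1$ with $q_1 \ge 0$. Then, writing $q' = (q_1, \dots, q_{n-1})$, we have $\frac{s}{r}|q'|^2 \le 2 p_1 q_1$, and hence $\frac{s}{r} q_1 \le 2 p_1$. -/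
/-- Algebraic core of Lemma 4.3: from `|p - q|² ≤ p₁² + (r-s)²` with
`p = (p₁, 0, …, 0, r-s)` and `qₙ ≤ p₁ q₁ / s`, `q₁ ≥ 0`, one gets
`(s/r)|q'|² ≤ 2 p₁ q₁` and hence `(s/r) q₁ ≤ 2 p₁`. -/
theorem stmt_8 (n : ℕ) (r s p1 : ℝ) (hs : 0 < s) (hsr : s < r) (hp1 : 0 < p1)
    (q : Fin (n + 2) → ℝ) (hq1 : 0 ≤ q 0)
    (p : Fin (n + 2) → ℝ)
    (hpdef : p = fun i => if i = 0 then p1 else if i = Fin.last (n + 1) then r - s else 0)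
    (hball : ∑ i, (p i - q i) ^ 2 ≤ p1 ^ 2 + (r - s) ^ 2)
    (hmono : q (Fin.last (n + 1)) ≤ p1 * q 0 / s) :
    s / r * ∑ i : Fin (n + 1), (q i.castSucc) ^ 2 ≤ 2 * p1 * q 0 ∧
    s / r * q 0 ≤ 2 * p1 := by
  have hr : (0:ℝ) < r := hs.trans hsr
  set Q := ∑ i : Fin (n + 1), (q i.castSucc) ^ 2 with hQdef
  set qn := q (Fin.last (n + 1)) with hqn
  have hcast : ∀ i : Fin (n+1), p i.castSucc = if i = 0 then p1 else 0 := by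
    intro i
    subst hpdef
    simp only [(Fin.castSucc_lt_last i).ne, if_false, Fin.castSucc_eq_zero_iff]
  have hplast : p (Fin.last (n+1)) = r - s := by
    subst hpdef
    have : Fin.last (n+1) ≠ 0 := by simp [Fin.ext_iff]
    simp [this]
  have hsplit : ∑ i, (p i - q i) ^ 2
      = (∑ i : Fin (n+1), (p i.castSucc - q i.castSucc) ^ 2) + ((r - s) - qn) ^ 2 := by
    rw [Fin.sum_univ_castSucc, hplast]
  have hsum1 : ∑ i : Fin (n+1), (p i.castSucc - q i.castSucc) ^ 2
      = Q + p1 ^ 2 - 2 * p1 * q 0 := by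
    have hterm : ∀ i : Fin (n+1), (p i.castSucc - q i.castSucc) ^ 2
        = (q i.castSucc) ^ 2 + (if i = 0 then p1 ^ 2 - 2 * p1 * q i.castSucc else 0) := by
      intro i
      rw [hcast i]
      split <;> ring
    rw [Finset.sum_congr rfl fun i _ => hterm i, Finset.sum_add_distrib,
      Finset.sum_ite_eq' Finset.univ (0 : Fin (n+1))]
    simp [hQdef]
    ring
  rw [hsplit, hsum1] at hball
  have h2 : qn * s ≤ p1 * q 0 := by rwa [← le_div_iff₀ hs]
  have h1 : Q ≤ 2 * p1 * q 0 + 2 * (r - s) * qn := by nlinarith [sq_nonneg qn]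
  have h3 : s * Q ≤ 2 * p1 * q 0 * r := by
    nlinarith [mul_le_mul_of_nonneg_left h1 hs.le,
      mul_nonneg (by linarith : (0:ℝ) ≤ r - s) (by linarith : 0 ≤ p1 * q 0 - qn * s)]
  have goal1 : s / r * Q ≤ 2 * p1 * q 0 := by
    rw [div_mul_eq_mul_div, div_le_iff₀ hr]
    linarith
  refine ⟨goal1, ?_⟩
  have hq0Q : q 0 ^ 2 ≤ Q := by
    have := Finset.single_le_sum (f := fun i : Fin (n+1) => (q i.castSucc) ^ 2)
      (fun i _ => sq_nonneg _) (Finset.mem_univ (0 : Fin (n+1)))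
    simpa [hQdef] using this
  rcases eq_or_lt_of_le hq1 with h0 | h0
  · rw [← h0]
    simp; positivity
  · have : s / r * (q 0 * q 0) ≤ 2 * p1 * q 0 := by
      calc s / r * (q 0 * q 0) = s / r * q 0 ^ 2 := by ring
      _ ≤ s / r * Q := by
          apply mul_le_mul_of_nonneg_left hq0Q; positivity
      _ ≤ 2 * p1 * q 0 := goal1
    have := (mul_le_mul_iff_of_pos_right h0).mp (by linarith : s / r * q 0 * q 0 ≤ 2 * p1 * q 0)
    exact this
end
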